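/- Let A = [a_{i,j}] be an n×n complex Hessenberg matrix with constant superdiagonal a_{k,k+1} = a for all k ∈ [n-1], and a_{i,j} = 0 for j > i+1. Then det(A) = Σ_{l=1}^{n} (-a)^{n-l} Σ_{{s₁<...<s_l} ⊆ [n], s_l = n} Π_{q=1}^{l} a_{s_q, s_{q-1}+1}, where s₀ := 0. -/

import Mathlib

/-!
Let `D_m` be the determinant of the leading `m × m` block and `F_m(r)` that of the same block
with its last row replaced by `r`. Expanding along the last column, whose only nonzero entries
are `c` and `r_m`, gives `F_{m+2}(r) = r_{m+2} D_{m+1} - c F_{m+1}(r)`, hence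
`F_{m+1}(r) = ∑_{k ≤ m} (-c)^{m-k} r_{k+1} D_k` and in particular
`D_{m+1} = ∑_{k ≤ m} (-c)^{m-k} a_{m+1,k+1} D_k`.
The sets `{s₁ < ⋯ < s_l = n}` encode the compositions of `n` into the blocks
`[s_{q-1}+1, s_q]`, and splitting off the last block shows that the right-hand side satisfies
the same recursion.
-/

open Finset

theorem Finset.sort_insert_of_forall_lt {α : Type*} [LinearOrder α] (s : Finset α) {x : α}
    (h : ∀ y ∈ s, y < x) : (insert x s).sort = s.sort ++ [x] := by
  have hx : x ∉ s := fun hx => lt_irrefl x (h x hx)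
  have hnodup : (s.sort ++ [x]).Nodup := by simp [List.nodup_append, hx]
  rw [← (List.toFinset_sort (· ≤ ·) hnodup).2]
  · ext; simp
  · simpa [List.pairwise_append] using fun y hy => (h y hy).le

theorem Finset.getLastD_sort (s : Finset ℕ) : s.sort.getLastD 0 = s.sup id := by
  induction s using Finset.induction_on_max with
  | empty => simp
  | insert x s hlt _ =>
    rw [sort_insert_of_forall_lt s hlt, List.getLastD_concat, sup_insert, id_eq]
    exact (max_eq_left (Finset.sup_le fun y hy => (hlt y hy).le)).symm

theorem Finset.filter_powerset_Icc_sup_eq_of_le {m k : ℕ} (hk : k ≤ m) :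
    {T ∈ (Icc 1 m).powerset | T.sup id = k} = {T ∈ (Icc 1 k).powerset | T.sup id = k} := by
  ext T
  simp only [mem_filter, mem_powerset, and_congr_left_iff]
  intro hT
  refine ⟨fun h x hx => ?_, fun h => h.trans (Icc_subset_Icc_right hk)⟩
  exact mem_Icc.2 ⟨(mem_Icc.1 (h hx)).1, hT ▸ le_sup (f := id) hx⟩

variable {R : Type*}

section Compositions

section CommMonoid

variable [CommMonoid R]

def chainProd (a : ℕ → ℕ → R) (L : List ℕ) : R :=
  ∏ q ∈ range L.length, a (L.getD q 0) ((if q = 0 then 0 else L.getD (q - 1) 0) + 1)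

theorem chainProd_concat (a : ℕ → ℕ → R) (L : List ℕ) (x : ℕ) :
    chainProd a (L ++ [x]) = chainProd a L * a x (L.getLastD 0 + 1) := by
  unfold chainProd
  rw [List.length_append, List.length_singleton, prod_range_succ]
  congr 1
  · refine prod_congr rfl fun q hq => ?_
    rw [mem_range] at hq
    rw [List.getD_append _ _ _ _ hq]
    split_ifs
    · rfl
    · rw [List.getD_append _ _ _ _ (by omega)]
  · rcases L.eq_nil_or_concat with rfl | ⟨L, y, rfl⟩ <;> simp

theorem chainProd_sort_insert (a : ℕ → ℕ → R) (s : Finset ℕ) {x : ℕ} (h : ∀ y ∈ s, y < x) :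
    chainProd a (insert x s).sort = chainProd a s.sort * a x (s.sup id + 1) := by
  rw [sort_insert_of_forall_lt s h, chainProd_concat, getLastD_sort]

end CommMonoid

variable [CommRing R]

/-- `T = {s₁ < ⋯ < s_l}` runs over the sets with `s_l = k`, the empty set standing for the empty
composition of `k = 0` (`∅.sup id = 0`). -/
def compositionSum (a : ℕ → ℕ → R) (c : R) (k : ℕ) : R :=
  ∑ T ∈ (Icc 1 k).powerset with T.sup id = k, (-c) ^ (k - #T) * chainProd a T.sort

theorem compositionSum_zero (a : ℕ → ℕ → R) (c : R) : compositionSum a c 0 = 1 := by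
  rw [compositionSum, Icc_eq_empty (by omega), powerset_empty, filter_singleton]
  simp [chainProd]

theorem compositionSum_succ (a : ℕ → ℕ → R) (c : R) (m : ℕ) :
    compositionSum a c (m + 1) =
      ∑ k ∈ range (m + 1), (-c) ^ (m - k) * a (m + 1) (k + 1) * compositionSum a c k := by
  have hnotMem : m + 1 ∉ Icc 1 m := by simp
  have hlt : ∀ T ∈ (Icc 1 m).powerset, ∀ y ∈ T, y < m + 1 := fun T hT y hy =>
    Nat.lt_succ_of_le (mem_Icc.1 (mem_powerset.1 hT hy)).2
  have hsup_le : ∀ T ∈ (Icc 1 m).powerset, T.sup id ≤ m := fun T hT =>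
    Finset.sup_le fun y hy => Nat.le_of_lt_succ (hlt T hT y hy)
  calc compositionSum a c (m + 1)
      = ∑ T ∈ (Icc 1 m).powerset,
          (-c) ^ (m - #T) * chainProd a T.sort * a (m + 1) (T.sup id + 1) := by
        rw [compositionSum, sum_filter, ← insert_Icc_right_eq_Icc_add_one (by omega),
          sum_powerset_insert hnotMem,
          sum_eq_zero fun T hT => if_neg (by have := hsup_le T hT; omega), zero_add]
        refine sum_congr rfl fun T hT => ?_
        have hT' : m + 1 ∉ T := fun h => lt_irrefl _ (hlt T hT _ h)
        rw [if_pos, card_insert_of_notMem hT', Nat.add_sub_add_right,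
          chainProd_sort_insert a T (hlt T hT), mul_assoc]
        rw [sup_insert, id_eq]
        exact max_eq_left ((hsup_le T hT).trans (Nat.le_succ m))
    _ = ∑ k ∈ range (m + 1), ∑ T ∈ (Icc 1 m).powerset with T.sup id = k,
          (-c) ^ (m - #T) * chainProd a T.sort * a (m + 1) (T.sup id + 1) := by
        rw [sum_fiberwise_of_maps_to fun T hT => mem_range_succ_iff.2 (hsup_le T hT)]
    _ = _ := by
        refine sum_congr rfl fun k hk => ?_
        rw [filter_powerset_Icc_sup_eq_of_le (mem_range_succ_iff.1 hk), compositionSum, mul_sum]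
        refine sum_congr rfl fun T hT => ?_
        obtain ⟨hT, rfl⟩ := mem_filter.1 hT
        have hsup : T.sup id ≤ m := mem_range_succ_iff.1 hk
        have hcard : #T ≤ T.sup id := by simpa using card_le_card (mem_powerset.1 hT)
        rw [show m - #T = (m - T.sup id) + (T.sup id - #T) by omega, pow_add]
        ring

theorem compositionSum_eq_sum_card (a : ℕ → ℕ → R) (c : R) {n : ℕ} (hn : 0 < n) :
    compositionSum a c n =
      ∑ l ∈ Icc 1 n, (-c) ^ (n - l) *
        ∑ S ∈ (Icc 1 n).powerset.filter (fun S => n ∈ S ∧ S.card = l),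
          chainProd a (S.sort (· ≤ ·)) := by
  have hfilter : {T ∈ (Icc 1 n).powerset | T.sup id = n} = {S ∈ (Icc 1 n).powerset | n ∈ S} := by
    refine filter_congr fun S hS => ⟨fun h => ?_, fun h => ?_⟩
    · have hne : S.Nonempty := nonempty_iff_ne_empty.2 fun h0 => by simp [h0, hn.ne] at h
      obtain ⟨x, hx, hxS⟩ := exists_mem_eq_sup S hne id
      rwa [← h, hxS]
    · exact le_antisymm (Finset.sup_le fun x hx => (mem_Icc.1 (mem_powerset.1 hS hx)).2)
        (le_sup (f := id) h)
  have hcard : ∀ S ∈ {S ∈ (Icc 1 n).powerset | n ∈ S}, #S ∈ Icc 1 n := fun S hS => by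
    obtain ⟨hS, hnS⟩ := mem_filter.1 hS
    exact mem_Icc.2 ⟨card_pos.2 ⟨n, hnS⟩, by simpa using card_le_card (mem_powerset.1 hS)⟩
  rw [compositionSum, hfilter, ← sum_fiberwise_of_maps_to hcard]
  refine sum_congr rfl fun l _ => ?_
  rw [filter_filter, mul_sum]
  exact sum_congr rfl fun S hS => by rw [(mem_filter.1 hS).2.2]

end Compositions

section Determinants

def principalMatrix (a : ℕ → ℕ → R) (m : ℕ) : Matrix (Fin m) (Fin m) R :=
  Matrix.of fun i j => a (i + 1) (j + 1)

def lastRowReplaced (a : ℕ → ℕ → R) (r : ℕ → R) (m : ℕ) : Matrix (Fin m) (Fin m) R :=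
  Matrix.of fun i j => if (i : ℕ) + 1 = m then r (j + 1) else a (i + 1) (j + 1)

theorem lastRowReplaced_self (a : ℕ → ℕ → R) (m : ℕ) :
    lastRowReplaced a (a m) m = principalMatrix a m := by
  ext i j
  simp only [lastRowReplaced, principalMatrix, Matrix.of_apply]
  split_ifs with h
  · rw [h]
  · rfl

theorem lastRowReplaced_submatrix_last_last (a : ℕ → ℕ → R) (r : ℕ → R) (m : ℕ) :
    (lastRowReplaced a r (m + 2)).submatrix (Fin.last (m + 1)).succAbove
      (Fin.last (m + 1)).succAbove = lastRowReplaced a (a (m + 1)) (m + 1) := by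
  ext i j
  simp only [lastRowReplaced, Matrix.submatrix_apply, Matrix.of_apply, Fin.succAbove_last,
    Fin.val_castSucc]
  split_ifs with h₁ h₂ h₂
  · omega
  · omega
  · rw [h₂]
  · rfl

theorem lastRowReplaced_submatrix_castSucc_last (a : ℕ → ℕ → R) (r : ℕ → R) (m : ℕ) :
    (lastRowReplaced a r (m + 2)).submatrix (Fin.last m).castSucc.succAbove
      (Fin.last (m + 1)).succAbove = lastRowReplaced a r (m + 1) := by
  ext i j
  have hi : ((Fin.last m).castSucc.succAbove i : ℕ) = if (i : ℕ) = m then m + 1 else i := by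
    rcases Fin.eq_castSucc_or_eq_last i with ⟨i, rfl⟩ | rfl
    · simp [Fin.succAbove_castSucc_of_lt _ _ (Fin.castSucc_lt_last i), i.isLt.ne]
    · simp
  simp only [lastRowReplaced, Matrix.submatrix_apply, Matrix.of_apply, Fin.succAbove_last,
    Fin.val_castSucc, hi]
  split_ifs <;> first | omega | rfl

variable [CommRing R]

theorem det_lastRowReplaced_add_two (a : ℕ → ℕ → R) (c : R) (r : ℕ → R) (m : ℕ)
    (hzero : ∀ i, 1 ≤ i → i ≤ m → a i (m + 2) = 0) (hsup : a (m + 1) (m + 2) = c) :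
    (lastRowReplaced a r (m + 2)).det =
      r (m + 2) * (principalMatrix a (m + 1)).det - c * (lastRowReplaced a r (m + 1)).det := by
  rw [Matrix.det_succ_column _ (Fin.last (m + 1)), Fin.sum_univ_castSucc, Fin.sum_univ_castSucc,
    sum_eq_zero, zero_add, lastRowReplaced_submatrix_last_last, lastRowReplaced_self,
    lastRowReplaced_submatrix_castSucc_last]
  · have hsuper : lastRowReplaced a r (m + 2) (Fin.last m).castSucc (Fin.last (m + 1)) = c := by
      simp [lastRowReplaced, hsup]
    have hcorner :
        lastRowReplaced a r (m + 2) (Fin.last (m + 1)) (Fin.last (m + 1)) = r (m + 2) := by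
      simp [lastRowReplaced]
    simp only [hsuper, hcorner, Fin.val_castSucc, Fin.val_last,
      Odd.neg_one_pow (⟨m, by ring⟩ : Odd (m + (m + 1))), Even.neg_one_pow ⟨m + 1, rfl⟩]
    ring
  · intro i _
    have hentry : lastRowReplaced a r (m + 2) i.castSucc.castSucc (Fin.last (m + 1)) = 0 := by
      simp only [lastRowReplaced, Matrix.of_apply, Fin.val_castSucc, Fin.val_last]
      rw [if_neg (by omega)]
      exact hzero _ (by omega) (by omega)
    rw [hentry, mul_zero, zero_mul]

theorem det_lastRowReplaced_eq_sum (a : ℕ → ℕ → R) (c : R) (m : ℕ)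
    (ha : ∀ i j, 1 ≤ i → i + 1 < j → j ≤ m + 1 → a i j = 0)
    (hsup : ∀ k, 1 ≤ k → k ≤ m → a k (k + 1) = c) (r : ℕ → R) :
    (lastRowReplaced a r (m + 1)).det =
      ∑ k ∈ range (m + 1), (-c) ^ (m - k) * r (k + 1) * (principalMatrix a k).det := by
  induction m with
  | zero => simp [lastRowReplaced, principalMatrix]
  | succ m ih =>
    rw [det_lastRowReplaced_add_two a c r m (fun i hi him => ha i (m + 2) hi (by omega) le_rfl)
      (hsup (m + 1) (by omega) le_rfl), sum_range_succ, Nat.sub_self, pow_zero, one_mul,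
      ih (fun i j hi hij hj => ha i j hi hij (by omega)) (fun k hk hkm => hsup k hk (by omega)),
      mul_sum, sub_eq_add_neg, add_comm, ← sum_neg_distrib]
    refine congrArg (· + _) (sum_congr rfl fun k hk => ?_)
    rw [show m + 1 - k = (m - k) + 1 by have := mem_range.1 hk; omega, pow_succ]
    ring

theorem det_principalMatrix_eq_compositionSum (a : ℕ → ℕ → R) (c : R) (m : ℕ)
    (ha : ∀ i j, 1 ≤ i → i + 1 < j → j ≤ m → a i j = 0)
    (hsup : ∀ k, 1 ≤ k → k < m → a k (k + 1) = c) :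
    (principalMatrix a m).det = compositionSum a c m := by
  induction m using Nat.strong_induction_on with
  | _ m ih =>
    rcases m with _ | m
    · simp [principalMatrix, compositionSum_zero]
    · rw [← lastRowReplaced_self,
        det_lastRowReplaced_eq_sum a c m ha (fun k hk hkm => hsup k hk (by omega)),
        compositionSum_succ]
      refine sum_congr rfl fun k hk => ?_
      have hk := mem_range_succ_iff.1 hk
      rw [ih k (by omega) (fun i j hi hij hj => ha i j hi hij (by omega))
        (fun l hl hlk => hsup l hl (by omega))]

end Determinants

/-- **Trudi-type formula for Hessenberg matrices with constant
superdiagonal.**  Let `A = [a_{i,j}]` (entries given by a `1`-indexed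
function `a`) be an `n × n` complex lower Hessenberg matrix
(`a_{i,j} = 0` for `j > i+1`) whose superdiagonal entries are all equal
to `c`, i.e. `a_{k,k+1} = c` for `k ∈ [n-1]`.  Then
`det A = ∑_{l=1}^n (-c)^{n-l} ∑_{{s₁<…<s_l}⊆[n], s_l=n}
  ∏_{q=1}^l a_{s_q, s_{q-1}+1}`, with `s₀ := 0`. -/
theorem trudi_formula_constant_superdiagonal (n : ℕ) (hn : 0 < n)
    (a : ℕ → ℕ → ℂ) (c : ℂ)
    (ha : ∀ i j : ℕ, 1 ≤ i → i ≤ n → 1 ≤ j → j ≤ n → i + 1 < j → a i j = 0)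
    (hsup : ∀ k : ℕ, 1 ≤ k → k ≤ n - 1 → a k (k + 1) = c) :
    (Matrix.of fun i j : Fin n => a ((i : ℕ) + 1) ((j : ℕ) + 1)).det =
      ∑ l ∈ Finset.Icc 1 n, (-c) ^ (n - l) *
        ∑ S ∈ (Finset.Icc 1 n).powerset.filter (fun S => n ∈ S ∧ S.card = l),
          ∏ q ∈ Finset.range l,
            a ((S.sort (· ≤ ·)).getD q 0)
              ((if q = 0 then 0 else (S.sort (· ≤ ·)).getD (q - 1) 0) + 1) := by
  have hdet : (principalMatrix a n).det = compositionSum a c n :=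
    det_principalMatrix_eq_compositionSum a c n
      (fun i j hi hij hj => ha i j hi (by omega) (by omega) hj hij)
      (fun k hk hkn => hsup k hk (by omega))
  rw [← principalMatrix, hdet, compositionSum_eq_sum_card a c hn]
  refine sum_congr rfl fun l _ => congrArg _ (sum_congr rfl fun S hS => ?_)
  rw [chainProd, length_sort, (mem_filter.1 hS).2.2]
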